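/- The function α ↦ J(α)/(2 I(α)) is strictly increasing on (0,∞), where I(α) = ∫₀^α (√α/√(α−s)) (1+s²)^{-5/4} ds and J(α) = ∫₀^α (√α/√(α−s)) · s (1+s²)^{-5/4} ds. -/

import Mathlib

open Real MeasureTheory

/-- `I(α) = ∫₀^α (√α/√(α−s)) (1+s²)^{-5/4} ds`. -/
noncomputable def Ifun (α : ℝ) : ℝ :=
  ∫ s in (0:ℝ)..α, (Real.sqrt α / Real.sqrt (α - s)) * (1 + s ^ 2) ^ (-(5:ℝ)/4)

/-- `J(α) = ∫₀^α (√α/√(α−s)) · s (1+s²)^{-5/4} ds`. -/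
noncomputable def Jfun (α : ℝ) : ℝ :=
  ∫ s in (0:ℝ)..α, (Real.sqrt α / Real.sqrt (α - s)) * (s * (1 + s ^ 2) ^ (-(5:ℝ)/4))

/-!
Write `ρ(s) = (1 + s²)^{1/4}`. Since `-2√(α - s)/ρ(s)` is a primitive of
`(1 + αs)/(√(α - s) ρ(s)⁵)`, we get `I + αJ = 2α`. Integrating by parts against the primitive
`s/(1 + αs) · (-2√(α - s)/ρ(s))` and then substituting `r = (α - s)/(1 + αs)` gives
`ρ(α)³ J = 2√α Φ(α)` with `Φ(α) = ∫₀^α √r/ρ(r) dr`. Hence `I/J = G(α) = √α ρ(α)³/Φ(α) - α`, and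
`G' < 0` reduces to `(1 + 4α²)Φ < 2√α ρ (αρ² + Φ²)`, which follows from `Φ ≤ (2/3)α^{3/2}` when
`8α² ≤ 1` and from AM-GM otherwise.
-/

open Set intervalIntegral

namespace Elastica

noncomputable def ρ (s : ℝ) : ℝ := (1 + s ^ 2) ^ (1 / 4 : ℝ)

lemma one_add_sq_pos (s : ℝ) : 0 < 1 + s ^ 2 := by positivity

lemma ρ_pos (s : ℝ) : 0 < ρ s := rpow_pos_of_pos (one_add_sq_pos s) _

lemma ρ_ne_zero (s : ℝ) : ρ s ≠ 0 := (ρ_pos s).ne'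

lemma ρ_zero : ρ 0 = 1 := by simp [ρ]

lemma ρ_pow_four (s : ℝ) : ρ s ^ 4 = 1 + s ^ 2 := by
  rw [ρ, ← rpow_natCast, ← rpow_mul (one_add_sq_pos s).le]
  norm_num

lemma one_le_ρ (s : ℝ) : 1 ≤ ρ s := one_le_rpow (by nlinarith) (by norm_num)

@[fun_prop]
lemma continuous_ρ : Continuous ρ :=
  (continuous_const.add (continuous_pow 2)).rpow_const fun s => Or.inl (one_add_sq_pos s).ne'

lemma hasDerivAt_ρ (s : ℝ) : HasDerivAt ρ (s / (2 * ρ s ^ 3)) s := by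
  have h : HasDerivAt ρ _ s := ((hasDerivAt_pow 2 s).const_add 1).rpow_const (p := 1 / 4)
    (Or.inl (one_add_sq_pos s).ne')
  rw [rpow_sub_one (one_add_sq_pos s).ne', ← ρ, ← ρ_pow_four] at h
  refine h.congr_deriv ?_
  field_simp [ρ_ne_zero]
  norm_num
  ring

lemma one_add_sq_rpow_neg_five_fourths (s : ℝ) : (1 + s ^ 2) ^ (-(5 : ℝ) / 4) = (ρ s ^ 5)⁻¹ := by
  rw [ρ, ← rpow_natCast _ 5, ← rpow_mul (one_add_sq_pos s).le, ← rpow_neg (one_add_sq_pos s).le]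
  norm_num

lemma intervalIntegrable_inv_sqrt_sub_mul {α : ℝ} (hα : 0 ≤ α) {f : ℝ → ℝ}
    (hf : ContinuousOn f (uIcc 0 α)) :
    IntervalIntegrable (fun s => (√(α - s))⁻¹ * f s) volume 0 α := by
  have h := (intervalIntegrable_rpow' (r := -(1 / 2)) (by norm_num) (a := 0) (b := α))
    |>.comp_sub_left α
  rw [sub_zero, sub_self] at h
  refine (h.symm.congr fun s hs => ?_).mul_continuousOn hf
  rw [uIoc_of_le hα] at hs
  simp only [rpow_neg (sub_nonneg.2 hs.2), sqrt_eq_rpow]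

lemma hasDerivAt_neg_two_sqrt_sub_div_ρ {α s : ℝ} (hs : s < α) :
    HasDerivAt (fun s => -(2 * √(α - s) / ρ s)) ((√(α - s))⁻¹ * ((1 + α * s) / ρ s ^ 5)) s := by
  have hpos : 0 < α - s := sub_pos.2 hs
  have h : HasDerivAt (fun s => -(2 * √(α - s) / ρ s)) _ s :=
    (((hasDerivAt_id s).const_sub α).sqrt hpos.ne').const_mul 2 |>.div (hasDerivAt_ρ s)
      (ρ_ne_zero s) |>.neg
  refine h.congr_deriv ?_
  simp only [id]
  field_simp [ρ_ne_zero, (sqrt_pos.2 hpos).ne']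
  linear_combination s * sq_sqrt hpos.le + ρ_pow_four s

lemma hasDerivAt_div_one_add_mul_mul_neg_two_sqrt_sub_div_ρ {α s : ℝ} (hs : s < α)
    (hαs : 1 + α * s ≠ 0) :
    HasDerivAt (fun s => s / (1 + α * s) * -(2 * √(α - s) / ρ s))
      ((√(α - s))⁻¹ * (s / ρ s ^ 5) - 2 * (√(α - s) / (ρ s * (1 + α * s) ^ 2))) s := by
  have hquot : HasDerivAt (fun s => s / (1 + α * s)) (1 / (1 + α * s) ^ 2) s := by
    refine ((hasDerivAt_id s).div (((hasDerivAt_id s).const_mul α).const_add 1) hαs).congr_deriv ?_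
    simp only [id]
    field_simp
    ring
  have h : HasDerivAt (fun s => s / (1 + α * s) * -(2 * √(α - s) / ρ s)) _ s :=
    hquot.mul (hasDerivAt_neg_two_sqrt_sub_div_ρ hs)
  refine h.congr_deriv ?_
  field_simp [ρ_ne_zero]
  ring

lemma integral_inv_sqrt_sub_mul_one_add_mul_div_ρ_pow_five {α : ℝ} (hα : 0 ≤ α) :
    ∫ s in (0 : ℝ)..α, (√(α - s))⁻¹ * ((1 + α * s) / ρ s ^ 5) = 2 * √α := by
  have hcont : Continuous fun s => -(2 * √(α - s) / ρ s) := by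
    fun_prop (disch := exact ρ_ne_zero)
  have hf : Continuous fun s => (1 + α * s) / ρ s ^ 5 := by
    fun_prop (disch := simp [ρ_ne_zero])
  rw [integral_eq_sub_of_hasDeriv_right_of_le hα hcont.continuousOn
    (fun s hs => (hasDerivAt_neg_two_sqrt_sub_div_ρ hs.2).hasDerivWithinAt)
    (intervalIntegrable_inv_sqrt_sub_mul hα hf.continuousOn)]
  simp [ρ_zero]

lemma integral_inv_sqrt_sub_mul_div_ρ_pow_five {α : ℝ} (hα : 0 ≤ α) :
    ∫ s in (0 : ℝ)..α, (√(α - s))⁻¹ * (s / ρ s ^ 5) =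
      2 * ∫ s in (0 : ℝ)..α, √(α - s) / (ρ s * (1 + α * s) ^ 2) := by
  have hpos : ∀ s ∈ Icc 0 α, 1 + α * s ≠ 0 := fun s hs => by nlinarith [hs.1]
  have hcont : ContinuousOn (fun s => s / (1 + α * s) * -(2 * √(α - s) / ρ s)) (Icc 0 α) := by
    have := continuous_ρ.continuousOn (s := Icc 0 α)
    fun_prop (disch := first | exact hpos | simp [ρ_ne_zero])
  have hf : Continuous fun s => s / ρ s ^ 5 := by
    fun_prop (disch := simp [ρ_ne_zero])
  have hI₁ := intervalIntegrable_inv_sqrt_sub_mul hα hf.continuousOn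
  have hI₂ : IntervalIntegrable (fun s => √(α - s) / (ρ s * (1 + α * s) ^ 2)) volume 0 α := by
    refine ContinuousOn.intervalIntegrable ?_
    rw [uIcc_of_le hα]
    refine ContinuousOn.div (by fun_prop) (by fun_prop) fun s hs =>
      mul_ne_zero (ρ_ne_zero s) (pow_ne_zero 2 (hpos s hs))
  have h := integral_eq_sub_of_hasDeriv_right_of_le hα hcont
    (fun s hs => (hasDerivAt_div_one_add_mul_mul_neg_two_sqrt_sub_div_ρ hs.2
      (hpos s (Ioo_subset_Icc_self hs))).hasDerivWithinAt) (hI₁.sub (hI₂.const_mul 2))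
  rw [integral_sub hI₁ (hI₂.const_mul 2), intervalIntegral.integral_const_mul] at h
  simp only [sub_self, sqrt_zero, mul_zero, zero_div, neg_zero, zero_mul] at h
  linarith

noncomputable def Φ (α : ℝ) : ℝ := ∫ r in (0 : ℝ)..α, √r / ρ r

lemma continuous_sqrt_div_ρ : Continuous fun r => √r / ρ r := by
  fun_prop (disch := exact ρ_ne_zero)

lemma hasDerivAt_Φ (α : ℝ) : HasDerivAt Φ (√α / ρ α) α :=
  (continuous_sqrt_div_ρ.integral_hasStrictDerivAt 0 α).hasDerivAt

lemma Φ_pos {α : ℝ} (hα : 0 < α) : 0 < Φ α :=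
  intervalIntegral_pos_of_pos_on (continuous_sqrt_div_ρ.intervalIntegrable 0 α)
    (fun r hr => div_pos (sqrt_pos.2 hr.1) (ρ_pos r)) hα

lemma Φ_le {α : ℝ} (hα : 0 ≤ α) : Φ α ≤ 2 / 3 * √α ^ 3 := by
  have hmono : Φ α ≤ ∫ r in (0 : ℝ)..α, r ^ (1 / 2 : ℝ) :=
    integral_mono_on hα (continuous_sqrt_div_ρ.intervalIntegrable 0 α)
      (intervalIntegrable_rpow' (by norm_num)) fun r _ => by
        rw [← sqrt_eq_rpow]
        exact div_le_self (sqrt_nonneg r) (one_le_ρ r)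
  have hint : ∫ r in (0 : ℝ)..α, r ^ (1 / 2 : ℝ) = 2 / 3 * √α ^ 3 := by
    rw [integral_rpow (Or.inl (by norm_num)), zero_rpow (by norm_num), sqrt_eq_rpow,
      ← rpow_natCast, ← rpow_mul hα]
    norm_num
    ring
  exact hint ▸ hmono

lemma ρ_div_one_add_mul {α s : ℝ} (h : 0 < 1 + α * s) :
    ρ ((α - s) / (1 + α * s)) = ρ α * ρ s / √(1 + α * s) := by
  have hsqrt := sqrt_pos.2 h
  refine (pow_left_inj₀ (ρ_pos _).le (div_pos (mul_pos (ρ_pos α) (ρ_pos s)) hsqrt).le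
    (n := 4) (by norm_num)).1 ?_
  rw [div_pow, mul_pow, ρ_pow_four, ρ_pow_four, ρ_pow_four,
    show √(1 + α * s) ^ 4 = (1 + α * s) ^ 2 by rw [show 4 = 2 * 2 from rfl, pow_mul, sq_sqrt h.le]]
  field_simp
  ring

lemma Φ_eq_mul_integral {α : ℝ} (hα : 0 ≤ α) :
    Φ α = ρ α ^ 3 * ∫ s in (0 : ℝ)..α, √(α - s) / (ρ s * (1 + α * s) ^ 2) := by
  have hpos : ∀ s ∈ uIcc 0 α, 0 < 1 + α * s := fun s hs => by
    rw [uIcc_of_le hα] at hs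
    nlinarith [hs.1]
  have hderiv : ∀ s ∈ uIcc 0 α, HasDerivAt (fun s => (α - s) / (1 + α * s))
      (-(1 + α ^ 2) / (1 + α * s) ^ 2) s := fun s hs => by
    refine (((hasDerivAt_id s).const_sub α).div (((hasDerivAt_id s).const_mul α).const_add 1)
      (hpos s hs).ne').congr_deriv ?_
    simp only [id]
    ring
  have hcont : ContinuousOn (fun s => -(1 + α ^ 2) / (1 + α * s) ^ 2) (uIcc 0 α) :=
    ContinuousOn.div (by fun_prop) (by fun_prop) fun s hs => pow_ne_zero 2 (hpos s hs).ne'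
  have h := integral_comp_mul_deriv hderiv hcont continuous_sqrt_div_ρ
  simp only [sub_zero, mul_zero, add_zero, div_one, sub_self, zero_div] at h
  rw [integral_symm (f := fun r => √r / ρ r) 0 α] at h
  rw [Φ, ← neg_neg (∫ r in (0 : ℝ)..α, √r / ρ r), ← h, ← intervalIntegral.integral_const_mul,
    ← intervalIntegral.integral_neg]
  refine integral_congr fun s hs => ?_
  simp only [Function.comp, ρ_div_one_add_mul (hpos s hs), sqrt_div' _ (hpos s hs).le]
  field_simp [ρ_ne_zero, (sqrt_pos.2 (hpos s hs)).ne', (hpos s hs).ne']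
  linear_combination (-√(α - s)) * ρ_pow_four α

lemma Ifun_eq_mul_integral (α : ℝ) :
    Ifun α = √α * ∫ s in (0 : ℝ)..α, (√(α - s))⁻¹ * (ρ s ^ 5)⁻¹ := by
  rw [Ifun, ← intervalIntegral.integral_const_mul]
  congr 1 with s
  rw [one_add_sq_rpow_neg_five_fourths]
  ring

lemma Jfun_eq_mul_integral (α : ℝ) :
    Jfun α = √α * ∫ s in (0 : ℝ)..α, (√(α - s))⁻¹ * (s / ρ s ^ 5) := by
  rw [Jfun, ← intervalIntegral.integral_const_mul]
  congr 1 with s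
  rw [one_add_sq_rpow_neg_five_fourths]
  ring

lemma Ifun_eq_mul_two_sub_Jfun {α : ℝ} (hα : 0 ≤ α) : Ifun α = α * (2 - Jfun α) := by
  have hA := intervalIntegrable_inv_sqrt_sub_mul hα (f := fun s => (ρ s ^ 5)⁻¹)
    (by fun_prop (disch := simp [ρ_ne_zero]))
  have hB := intervalIntegrable_inv_sqrt_sub_mul hα (f := fun s => s / ρ s ^ 5)
    (by fun_prop (disch := simp [ρ_ne_zero]))
  have hsum : (∫ s in (0 : ℝ)..α, (√(α - s))⁻¹ * (ρ s ^ 5)⁻¹) +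
      α * ∫ s in (0 : ℝ)..α, (√(α - s))⁻¹ * (s / ρ s ^ 5) = 2 * √α := by
    rw [← integral_inv_sqrt_sub_mul_one_add_mul_div_ρ_pow_five hα,
      ← intervalIntegral.integral_const_mul,
      ← integral_add hA (hB.const_mul α)]
    congr 1 with s
    ring
  rw [Ifun_eq_mul_integral, Jfun_eq_mul_integral]
  linear_combination √α * hsum + 2 * mul_self_sqrt hα

lemma ρ_pow_three_mul_Jfun {α : ℝ} (hα : 0 ≤ α) : ρ α ^ 3 * Jfun α = 2 * √α * Φ α := by
  rw [Jfun_eq_mul_integral, integral_inv_sqrt_sub_mul_div_ρ_pow_five hα, Φ_eq_mul_integral hα]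
  ring

lemma Ifun_pos {α : ℝ} (hα : 0 < α) : 0 < Ifun α := by
  rw [Ifun_eq_mul_integral]
  refine mul_pos (sqrt_pos.2 hα) (intervalIntegral_pos_of_pos_on
    (intervalIntegrable_inv_sqrt_sub_mul hα.le (by fun_prop (disch := simp [ρ_ne_zero])))
    (fun s hs => mul_pos (inv_pos.2 (sqrt_pos.2 (sub_pos.2 hs.2)))
      (inv_pos.2 (pow_pos (ρ_pos s) 5)))
    hα)

lemma Jfun_pos {α : ℝ} (hα : 0 < α) : 0 < Jfun α := by
  have h := ρ_pow_three_mul_Jfun hα.le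
  have : 0 < ρ α ^ 3 * Jfun α := h ▸ mul_pos (mul_pos two_pos (sqrt_pos.2 hα)) (Φ_pos hα)
  exact pos_of_mul_pos_right this (pow_pos (ρ_pos α) 3).le

lemma one_add_four_pow_four_mul_lt {σ τ φ : ℝ} (hσ : 0 < σ) (hτ : 0 < τ)
    (hτ4 : τ ^ 4 = 1 + σ ^ 4) (hφ : 0 < φ) (hφle : φ ≤ 2 / 3 * σ ^ 3) :
    (1 + 4 * σ ^ 4) * φ < 2 * σ * τ * (σ ^ 2 * τ ^ 2 + φ ^ 2) := by
  have hτ1 : 1 ≤ τ := le_of_pow_le_pow_left₀ (n := 4) (by norm_num) hτ.le (by nlinarith)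
  -- For small σ the bound on φ suffices; for large σ use AM-GM, `σ²τ² + φ² ≥ 2στφ`.
  rcases le_or_gt (8 * σ ^ 4) 1 with hsmall | hlarge
  · have h1 : (1 + 4 * σ ^ 4) * φ ≤ σ ^ 3 := by nlinarith
    have h2 : σ ^ 3 < 2 * σ * τ * (σ ^ 2 * τ ^ 2) := by
      have : 1 ≤ τ ^ 3 := one_le_pow₀ hτ1
      nlinarith [pow_pos hσ 3]
    nlinarith [mul_pos (mul_pos hσ hτ) (pow_pos hφ 2)]
  · have hamgm : 2 * σ * τ * φ ≤ σ ^ 2 * τ ^ 2 + φ ^ 2 := by nlinarith [sq_nonneg (σ * τ - φ)]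
    have hcoef : 1 + 4 * σ ^ 4 < 4 * σ ^ 2 * τ ^ 2 := by
      have hsq : (1 + 4 * σ ^ 4) ^ 2 < (4 * σ ^ 2 * τ ^ 2) ^ 2 := by nlinarith
      exact lt_of_pow_lt_pow_left₀ 2 (by positivity) hsq
    nlinarith [mul_pos hσ hτ]

noncomputable def G (α : ℝ) : ℝ := √α * ρ α ^ 3 / Φ α - α

lemma Ifun_div_Jfun {α : ℝ} (hα : 0 < α) : Ifun α / Jfun α = G α := by
  have hJ := ρ_pow_three_mul_Jfun hα.le
  have hΦ := Φ_pos hα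
  have hJ0 : Jfun α ≠ 0 := by
    rintro h0
    rw [h0, mul_zero] at hJ
    exact (mul_pos (mul_pos two_pos (sqrt_pos.2 hα)) hΦ).ne hJ
  have hquot : √α * ρ α ^ 3 / Φ α = 2 * α / Jfun α := by
    rw [div_eq_div_iff hΦ.ne' hJ0]
    linear_combination √α * hJ + 2 * Φ α * mul_self_sqrt hα.le
  rw [Ifun_eq_mul_two_sub_Jfun hα.le, G, hquot]
  field_simp

lemma G_pos {α : ℝ} (hα : 0 < α) : 0 < G α :=
  Ifun_div_Jfun hα ▸ div_pos (Ifun_pos hα) (Jfun_pos hα)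

lemma Jfun_div_two_mul_Ifun {α : ℝ} (hα : 0 < α) : Jfun α / (2 * Ifun α) = (2 * G α)⁻¹ := by
  rw [← Ifun_div_Jfun hα, ← mul_div_assoc, inv_div]

lemma hasDerivAt_G {α : ℝ} (hα : 0 < α) :
    HasDerivAt G (((1 + 4 * α ^ 2) * Φ α - 2 * √α * ρ α * (α * ρ α ^ 2 + Φ α ^ 2)) /
      (2 * √α * ρ α * Φ α ^ 2)) α := by
  have h : HasDerivAt (fun α => √α * ρ α ^ 3 / Φ α - α) _ α :=
    ((hasDerivAt_sqrt hα.ne').mul ((hasDerivAt_ρ α).pow 3)).div (hasDerivAt_Φ α)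
      (Φ_pos hα).ne' |>.sub (hasDerivAt_id α)
  refine h.congr_deriv ?_
  simp only [Pi.mul_apply, Pi.pow_apply]
  field_simp [ρ_ne_zero, (Φ_pos hα).ne', (sqrt_pos.2 hα).ne']
  linear_combination ρ α ^ 2 *
    (Φ α * ρ_pow_four α + (3 * α * Φ α - 2 * ρ α ^ 3 * √α) * sq_sqrt hα.le)

lemma strictAntiOn_G : StrictAntiOn G (Ioi 0) := by
  refine strictAntiOn_of_deriv_neg (convex_Ioi 0)
    (fun α hα => (hasDerivAt_G hα).continuousAt.continuousWithinAt) fun α hα => ?_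
  rw [interior_Ioi] at hα
  have hσ := sqrt_pos.2 hα
  have hΦ := Φ_pos hα
  have hσ4 : √α ^ 4 = α ^ 2 := by rw [show 4 = 2 * 2 from rfl, pow_mul, sq_sqrt hα.le]
  have hkey := one_add_four_pow_four_mul_lt hσ (ρ_pos α) (by rw [ρ_pow_four, hσ4]) hΦ
    (Φ_le hα.le)
  rw [hσ4, sq_sqrt hα.le] at hkey
  rw [(hasDerivAt_G hα).deriv]
  exact div_neg_of_neg_of_pos (by linarith) (by have := ρ_pos α; positivity)

end Elastica

open Elastica

/-- The shooting height `α ↦ J(α)/(2I(α))` is strictly increasing on `(0,∞)`. -/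
theorem stmt_11 : StrictMonoOn (fun α => Jfun α / (2 * Ifun α)) (Set.Ioi (0:ℝ)) := by
  intro a ha b hb hab
  simp only [Jfun_div_two_mul_Ifun ha, Jfun_div_two_mul_Ifun hb]
  have := G_pos hb
  gcongr
  exact strictAntiOn_G ha hb hab
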